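/- Define a sequence of positive integers (a_m)_{m≥0} by a_{3k} = a_{3k+1} = 1 and a_{3k+2} = 2(k+1) for every k ≥ 0 (these are the continued fraction coefficients of e−1). Define q₋₁ = 0, q₀ = 1, q_m = a_m·q_{m−1} + q_{m−2} for m ≥ 1, and N_m = a₀ + a₁ + ⋯ + a_m. Then the limit lim_{m→∞} (log q_m)/(√(N_m) · log N_m) exists. -/

import Mathlib

/-!
As all `a_i ≥ 1`, the recursion gives `a₁ ⋯ a_m ≤ q_m ≤ 2^m a₁ ⋯ a_m`. If `j = ⌊(m+1)/3⌋` is the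
number of blocks `(1, 1, 2k)` among `a₀, …, a_m`, then `a₁ ⋯ a_m = 2^j j!` and `N_m = m + 1 + j²`.
By Stirling, `log q_m = j log j + O(j)`, while `√N_m = j + O(1)` and `log N_m ~ 2 log j`; so the
ratio tends to `1/2`.
-/

/-- The continued fraction coefficients of `e - 1`:
`a_{3k} = a_{3k+1} = 1` and `a_{3k+2} = 2(k+1)`. -/
def aE (m : ℕ) : ℤ := if m % 3 = 2 then 2 * ((m : ℤ) / 3 + 1) else 1

/-- Denominators of the convergents, shifted by one: `qConv a (m+1) = q_m`, with
`q₋₁ = 0`, `q₀ = 1`, `q_m = a_m q_{m-1} + q_{m-2}`. -/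
def qConv (a : ℕ → ℤ) : ℕ → ℤ
  | 0 => 0
  | 1 => 1
  | n + 2 => a (n + 1) * qConv a (n + 1) + qConv a n

/-- `N_m = a₀ + a₁ + ⋯ + a_m`. -/
def Nsum (a : ℕ → ℤ) (m : ℕ) : ℤ := ∑ i ∈ Finset.range (m + 1), a i

open Filter Finset Real Asymptotics
open scoped Nat

section Continuant

variable {a : ℕ → ℤ}

theorem qConv_nonneg (ha : ∀ n, 0 ≤ a n) : ∀ n, 0 ≤ qConv a n
  | 0 => le_rfl
  | 1 => zero_le_one
  | n + 2 => add_nonneg (mul_nonneg (ha _) (qConv_nonneg ha (n + 1))) (qConv_nonneg ha n)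

theorem qConv_le_succ (ha : ∀ n, 1 ≤ a n) : ∀ n, qConv a n ≤ qConv a (n + 1)
  | 0 => zero_le_one
  | n + 1 => by
    have hq := qConv_nonneg (fun k => zero_le_one.trans (ha k))
    change qConv a (n + 1) ≤ a (n + 1) * qConv a (n + 1) + qConv a n
    nlinarith [ha (n + 1), hq n, hq (n + 1)]

theorem prod_le_qConv (ha : ∀ n, 0 ≤ a n) (n : ℕ) :
    ∏ i ∈ range n, a (i + 1) ≤ qConv a (n + 1) := by
  induction n with
  | zero => simp [qConv]
  | succ n ih =>
    rw [prod_range_succ, mul_comm]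
    calc a (n + 1) * ∏ i ∈ range n, a (i + 1) ≤ a (n + 1) * qConv a (n + 1) :=
          mul_le_mul_of_nonneg_left ih (ha _)
      _ ≤ a (n + 1) * qConv a (n + 1) + qConv a n := le_add_of_nonneg_right (qConv_nonneg ha n)

theorem qConv_le_two_pow_mul_prod (ha : ∀ n, 1 ≤ a n) (n : ℕ) :
    qConv a (n + 1) ≤ 2 ^ n * ∏ i ∈ range n, a (i + 1) := by
  induction n with
  | zero => simp [qConv]
  | succ n ih =>
    have hq := qConv_nonneg (fun k => zero_le_one.trans (ha k))
    have hstep : qConv a (n + 2) ≤ 2 * a (n + 1) * qConv a (n + 1) := by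
      change a (n + 1) * qConv a (n + 1) + qConv a n ≤ _
      nlinarith [ha (n + 1), hq (n + 1), qConv_le_succ ha n]
    calc qConv a (n + 2) ≤ 2 * a (n + 1) * (2 ^ n * ∏ i ∈ range n, a (i + 1)) :=
          hstep.trans (mul_le_mul_of_nonneg_left ih (by linarith [ha (n + 1)]))
      _ = 2 ^ (n + 1) * ∏ i ∈ range (n + 1), a (i + 1) := by rw [prod_range_succ]; ring

end Continuant

theorem Asymptotics.isEquivalent_of_abs_sub_le_mul {α : Type*} {l : Filter α} {u v w : α → ℝ}
    (C : ℝ) (hw : w =o[l] v) (h : ∀ᶠ x in l, |u x - v x| ≤ C * |w x|) : u ~[l] v :=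
  (IsBigO.of_bound C (by simpa only [Real.norm_eq_abs, Pi.sub_apply] using h)).trans_isLittleO hw

theorem log_factorial_le_mul_log (n : ℕ) : log (n ! : ℝ) ≤ n * log n := by
  rw [← log_pow]
  exact log_le_log (by positivity) (by exact_mod_cast Nat.factorial_le_pow n)

theorem mul_log_sub_le_log_factorial (n : ℕ) : n * log n - n ≤ log (n ! : ℝ) := by
  rcases Nat.eq_zero_or_pos n with rfl | hn
  · simp
  have hlogn : 0 ≤ log (n : ℝ) := log_nonneg (by exact_mod_cast hn)
  have hlogpi : 0 ≤ log (2 * π) := log_nonneg (by linarith [pi_gt_three])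
  linarith [Stirling.le_log_factorial_stirling hn.ne']

section CoefficientsOfEMinusOne

theorem one_le_aE (m : ℕ) : 1 ≤ aE m := by
  unfold aE
  split_ifs <;> omega

def completeBlocks (m : ℕ) : ℕ := (m + 1) / 3

theorem completeBlocks_succ_and_aE_succ (m : ℕ) :
    (completeBlocks (m + 1) = completeBlocks m + 1 ∧ aE (m + 1) = 2 * (completeBlocks m + 1)) ∨
      (completeBlocks (m + 1) = completeBlocks m ∧ aE (m + 1) = 1) := by
  unfold completeBlocks aE
  split_ifs <;> omega

theorem prod_aE (m : ℕ) :
    ∏ i ∈ range m, aE (i + 1) = 2 ^ completeBlocks m * (completeBlocks m)! := by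
  induction m with
  | zero => simp [completeBlocks]
  | succ m ih =>
    rw [prod_range_succ, ih]
    rcases completeBlocks_succ_and_aE_succ m with ⟨hc, ha⟩ | ⟨hc, ha⟩ <;> rw [hc, ha]
    · push_cast [Nat.factorial_succ]; ring
    · ring

theorem Nsum_aE (m : ℕ) : Nsum aE m = m + 1 + completeBlocks m ^ 2 := by
  induction m with
  | zero => simp [Nsum, completeBlocks, aE]
  | succ m ih =>
    rw [Nsum, sum_range_succ, ← Nsum, ih]
    rcases completeBlocks_succ_and_aE_succ m with ⟨hc, ha⟩ | ⟨hc, ha⟩ <;> rw [hc, ha] <;>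
      push_cast <;> ring

theorem tendsto_completeBlocks : Tendsto (fun m => (completeBlocks m : ℝ)) atTop atTop :=
  tendsto_natCast_atTop_atTop.comp
    ((Nat.tendsto_div_const_atTop three_ne_zero).comp (tendsto_add_atTop_nat 1))

theorem abs_log_qConv_aE_sub_le {m : ℕ} (hm : 1 ≤ completeBlocks m) :
    |log (qConv aE (m + 1) : ℝ) - completeBlocks m * log (completeBlocks m)| ≤
      6 * completeBlocks m := by
  set j := completeBlocks m with hj
  have hmj : (m : ℝ) ≤ 5 * j := by
    have : m ≤ 5 * j := by rw [hj, completeBlocks] at hm ⊢; omega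
    exact_mod_cast this
  have hj1 : (1 : ℝ) ≤ j := by exact_mod_cast hm
  have hP : (0 : ℝ) < 2 ^ j * j ! := by positivity
  have hlo : (2 ^ j * j ! : ℝ) ≤ qConv aE (m + 1) := by
    exact_mod_cast prod_aE m ▸ prod_le_qConv (fun n => zero_le_one.trans (one_le_aE n)) m
  have hhi : (qConv aE (m + 1) : ℝ) ≤ 2 ^ m * (2 ^ j * j !) := by
    exact_mod_cast prod_aE m ▸ qConv_le_two_pow_mul_prod one_le_aE m
  have hlogP : log (2 ^ j * j ! : ℝ) = j * log 2 + log (j ! : ℝ) := by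
    rw [log_mul (by positivity) (by positivity), log_pow]
  have hlog_lo := log_le_log hP hlo
  have hlog_hi := log_le_log (hP.trans_le hlo) hhi
  rw [log_mul (by positivity) hP.ne', log_pow, hlogP] at hlog_hi
  rw [hlogP] at hlog_lo
  have hlog2 : log 2 ≤ 1 := by linarith [log_two_lt_d9]
  have hjlog2 : 0 ≤ j * log 2 := by positivity
  have hmlog2 : m * log 2 ≤ 5 * j := by nlinarith [log_pos one_lt_two]
  have hjlog2' : j * log 2 ≤ j := by nlinarith
  rw [abs_sub_le_iff]
  constructor <;>
    linarith [log_factorial_le_mul_log j, mul_log_sub_le_log_factorial j]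

theorem isEquivalent_log_qConv_aE :
    (fun m => log (qConv aE (m + 1) : ℝ)) ~[atTop]
      fun m => (completeBlocks m : ℝ) * log (completeBlocks m) := by
  have hJ := tendsto_completeBlocks
  refine isEquivalent_of_abs_sub_le_mul 6 (w := fun m => (completeBlocks m : ℝ)) ?_ ?_
  · simpa using (isBigO_refl (fun m => (completeBlocks m : ℝ)) atTop).mul_isLittleO
      ((isLittleO_const_log_atTop (c := 1)).comp_tendsto hJ)
  · filter_upwards [eventually_ge_atTop 2] with m hm
    rw [Nat.abs_cast]
    exact abs_log_qConv_aE_sub_le (by unfold completeBlocks; omega)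

theorem abs_sqrt_Nsum_aE_sub_le (m : ℕ) : |√(Nsum aE m : ℝ) - completeBlocks m| ≤ 2 := by
  have hN : (Nsum aE m : ℝ) = m + 1 + (completeBlocks m : ℝ) ^ 2 := by
    rw [Nsum_aE]; push_cast; ring
  have hm : (m : ℝ) + 1 ≤ 3 * completeBlocks m + 3 := by
    have : m + 1 ≤ 3 * completeBlocks m + 3 := by unfold completeBlocks; omega
    exact_mod_cast this
  have hlo : (completeBlocks m : ℝ) ≤ √(Nsum aE m : ℝ) :=
    le_sqrt_of_sq_le (by rw [hN]; linarith)
  have hhi : √(Nsum aE m : ℝ) ≤ completeBlocks m + 2 :=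
    (sqrt_le_left (by positivity)).2 (by rw [hN]; nlinarith)
  rw [abs_sub_le_iff]
  constructor <;> linarith

theorem isEquivalent_sqrt_Nsum_aE :
    (fun m => √(Nsum aE m : ℝ)) ~[atTop] fun m => (completeBlocks m : ℝ) :=
  isEquivalent_of_abs_sub_le_mul 2 (w := fun _ => 1)
    ((isLittleO_one_left_iff ℝ).2 (tendsto_norm_atTop_atTop.comp tendsto_completeBlocks))
    (Eventually.of_forall fun m => by simpa using abs_sqrt_Nsum_aE_sub_le m)

theorem isEquivalent_log_Nsum_aE :
    (fun m => log (Nsum aE m : ℝ)) ~[atTop] fun m => 2 * log (completeBlocks m : ℝ) := by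
  have h := (IsEquivalent.refl (u := fun _ => (2 : ℝ))).mul
    (isEquivalent_sqrt_Nsum_aE.log tendsto_completeBlocks)
  refine h.congr_left (Eventually.of_forall fun m => ?_)
  have hN : (0 : ℝ) ≤ Nsum aE m := by rw [Nsum_aE]; positivity
  simp only [Pi.mul_apply, log_sqrt hN]
  ring

end CoefficientsOfEMinusOne

theorem stmt15 :
    ∃ L : ℝ, Filter.Tendsto
      (fun m : ℕ => Real.log ((qConv aE (m + 1) : ℤ) : ℝ) /
        (Real.sqrt ((Nsum aE m : ℤ) : ℝ) * Real.log ((Nsum aE m : ℤ) : ℝ)))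
      Filter.atTop (nhds L) := by
  refine ⟨1 / 2, ?_⟩
  have h := isEquivalent_log_qConv_aE.div (isEquivalent_sqrt_Nsum_aE.mul isEquivalent_log_Nsum_aE)
  refine h.symm.tendsto_nhds (tendsto_const_nhds.congr' ?_)
  filter_upwards [tendsto_completeBlocks.eventually_gt_atTop 1] with m hm
  have hlog := log_pos hm
  simp only [Pi.div_apply, Pi.mul_apply]
  field_simp
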